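/- arXiv:1507.03050 — 3 statements merged into one kernel-verified Lean document; each statement's English description precedes it below -/
import Mathlib

section
/- For every positive integer d, the positive orthant L^d_+ of the d-dimensional square grid has homogeneous growth with respect to the origin: for every m ≥ 0 and every nonempty subset T of the sphere S_m of radius m about the origin, the set T* of vertices of S_{m+1} adjacent to at least one vertex of T satisfies |T*| / |T| ≥ s_{m+1} / s_m ≥ 1, where s_n = |S_n|. -/
/-!
The distance from the origin to `x` is `∑ i, x i`, so `S_m` consists of the `x : Fin d → ℕ` with
coordinate sum `m`. Weight a pair `(x, i)` with `x ∈ S_m` by `x i + 1` and a pair `(y, i)` with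
`y ∈ S_{m+1}` by `y i`: the pairs over `T ⊆ S_m` then weigh `(m + d) |T|` in total, and those
over `T*` weigh `(m + 1) |T*|`. The injective map `(x, i) ↦ (x + e_i, i)` preserves weights and
sends pairs over `T` to pairs over `T*`, so `(m + d) |T| ≤ (m + 1) |T*|`. For `T = S_m` it misses
only pairs of weight `0`, so `(m + 1) s_{m+1} = (m + d) s_m`.
-/

open SimpleGraph

namespace Firefighter

variable {V : Type*}

/-- The set of vertices on fire at time `n`, starting from initial fire `X0`, with fire spreading
along paths of length at most `r` avoiding the protected sets `W 1, ..., W n`. -/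
def fireSet (G : SimpleGraph V) (r : ℕ) (X0 : Set V) (W : ℕ → Set V) : ℕ → Set V
  | 0 => X0
  | n + 1 => {v | ∃ u ∈ fireSet G r X0 W n, ∃ p : G.Walk u v, p.length ≤ r ∧
      ∀ w ∈ p.support, ∀ i, 1 ≤ i → i ≤ n + 1 → w ∉ W i}

/-- `W` is an `(f, r)`-containment strategy for the initial fire `X0` in `G`. -/
def IsContainmentStrategy (G : SimpleGraph V) (r : ℕ) (f : ℕ → ℕ)
    (X0 : Set V) (W : ℕ → Set V) : Prop :=
  (∀ n, 1 ≤ n → (W n).Finite ∧ (W n).ncard ≤ f n) ∧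
  (∀ n, Disjoint (fireSet G r X0 W n) (W (n + 1))) ∧
  (∃ N, 0 < N ∧ ∀ n, N ≤ n → fireSet G r X0 W n = fireSet G r X0 W N)

/-- `G` has the `(f, r)`-containment property. -/
def HasContainmentProperty (G : SimpleGraph V) (r : ℕ) (f : ℕ → ℕ) : Prop :=
  ∀ X0 : Set V, X0.Finite → ∃ W : ℕ → Set V, IsContainmentStrategy G r f X0 W

/-- A graph is locally finite if every vertex has finitely many neighbors. -/
def LocallyFiniteGraph (G : SimpleGraph V) : Prop := ∀ v, (G.neighborSet v).Finite

/-- The ball of radius `n` about the vertex `g0` (in the combinatorial metric). -/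
def ball (G : SimpleGraph V) (g0 : V) (n : ℕ) : Set V :=
  {v | G.Reachable g0 v ∧ G.dist g0 v ≤ n}

/-- The sphere of radius `n` about the vertex `g0` (in the combinatorial metric). -/
def sphere (G : SimpleGraph V) (g0 : V) (n : ℕ) : Set V :=
  {v | G.Reachable g0 v ∧ G.dist g0 v = n}

/-- For `T` a subset of the sphere of radius `n`, `nextAdj G g0 n T` is the set `T*` of vertices
of the sphere of radius `n+1` adjacent to at least one vertex of `T`. -/
def nextAdj (G : SimpleGraph V) (g0 : V) (n : ℕ) (T : Set V) : Set V :=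
  {v ∈ sphere G g0 (n + 1) | ∃ u ∈ T, G.Adj u v}

/-- A graph has bounded degree if there is a uniform finite bound on vertex degrees. -/
def BoundedDegree (G : SimpleGraph V) : Prop :=
  ∃ D : ℕ, ∀ v, (G.neighborSet v).Finite ∧ (G.neighborSet v).ncard ≤ D

/-- Two graphs are quasi-isometric. -/
def QuasiIsometric {V' : Type*} (G : SimpleGraph V) (H : SimpleGraph V') : Prop :=
  ∃ c : ℕ, 1 ≤ c ∧ ∃ (φ : V → V') (ψ : V' → V),
    (∀ g1 g2, H.dist (φ g1) (φ g2) ≤ c * G.dist g1 g2 + c) ∧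
    (∀ h1 h2, G.dist (ψ h1) (ψ h2) ≤ c * H.dist h1 h2 + c) ∧
    (∀ g, G.dist g (ψ (φ g)) ≤ c) ∧
    (∀ h, H.dist h (φ (ψ h)) ≤ c)

/-- `f ≼ g` : there is `c > 0` with `f n ≤ c * g (c*n + c) + c` for all `n ≥ c`. -/
def Preceq (f g : ℕ → ℕ) : Prop :=
  ∃ c : ℕ, 0 < c ∧ ∀ n, c ≤ n → f n ≤ c * g (c * n + c) + c

/-- `f` and `g` have equivalent asymptotic growth. -/
def AsympEquiv (f g : ℕ → ℕ) : Prop := Preceq f g ∧ Preceq g f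

/-- The ball of radius `n` about a set `X` of vertices. -/
def ballSet (G : SimpleGraph V) (X : Set V) (n : ℕ) : Set V :=
  {v | ∃ u ∈ X, ∃ p : G.Walk u v, p.length ≤ n}

/-- `G` has homogeneous growth with respect to `g0`: for some `r`, for all `n ≥ r` and every
nonempty `T ⊆ S_n`, `|T*| / |T| ≥ s_{n+1} / s_n ≥ 1`. -/
def HomogeneousGrowth (G : SimpleGraph V) (g0 : V) : Prop :=
  ∃ r : ℕ, ∀ n, r ≤ n → ∀ T ⊆ sphere G g0 n, T.Nonempty →
    (((sphere G g0 (n + 1)).ncard : ℝ) / ((sphere G g0 n).ncard : ℝ) ≤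
      ((nextAdj G g0 n T).ncard : ℝ) / (T.ncard : ℝ)) ∧
    (1 ≤ ((sphere G g0 (n + 1)).ncard : ℝ) / ((sphere G g0 n).ncard : ℝ))

/-- The positive orthant of the d-dimensional square grid: vertices are `Fin d → ℕ`, and two
vertices are adjacent iff the sum of coordinatewise absolute differences is `1`. -/
def orthantGrid (d : ℕ) : SimpleGraph (Fin d → ℕ) where
  Adj x y := ∑ i, ((x i : ℤ) - (y i : ℤ)).natAbs = 1
  symm := by
    constructor
    intro x y h
    rw [← h]
    refine Finset.sum_congr rfl fun i _ => ?_
    rw [← Int.natAbs_neg, neg_sub]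
  loopless := by
    constructor
    intro x h
    simp at h

/-- The d-dimensional square grid `L^d`: vertices are `Fin d → ℤ`, and two vertices are adjacent
iff the sum of coordinatewise absolute differences is `1`. -/
def gridZ (d : ℕ) : SimpleGraph (Fin d → ℤ) where
  Adj x y := ∑ i, (x i - y i).natAbs = 1
  symm := by
    constructor
    intro x y h
    rw [← h]
    refine Finset.sum_congr rfl fun i _ => ?_
    rw [← Int.natAbs_neg, neg_sub]
  loopless := by
    constructor
    intro x h
    simp at h

section LevelSets

open Finset

variable {ι : Type*} [DecidableEq ι]

lemma sub_single_one_add_single_one {y : ι → ℕ} {i : ι} (hy : y i ≠ 0) :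
    y - Pi.single i 1 + Pi.single i 1 = y := by
  ext j
  rcases eq_or_ne j i with rfl | hj
  · simp only [Pi.add_apply, Pi.sub_apply, Pi.single_eq_same]
    omega
  · simp [hj]

def stepUp (p : (ι → ℕ) × ι) : (ι → ℕ) × ι := (p.1 + Pi.single p.2 1, p.2)

lemma stepUp_injective : Function.Injective (stepUp (ι := ι)) := by
  rintro ⟨x, i⟩ ⟨x', i'⟩ h
  simp only [stepUp, Prod.mk.injEq] at h
  obtain ⟨h, rfl⟩ := h
  exact Prod.ext (add_right_cancel h) rfl

lemma stepUp_apply_snd (p : (ι → ℕ) × ι) : (stepUp p).1 (stepUp p).2 = p.1 p.2 + 1 := by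
  simp [stepUp]

variable [Fintype ι]

lemma sum_add_single_one (x : ι → ℕ) (i : ι) :
    ∑ j, (x + Pi.single i 1 : ι → ℕ) j = ∑ j, x j + 1 := by
  simp [sum_add_distrib]

lemma add_single_one_mem_piAntidiag {x : ι → ℕ} {m : ℕ} (hx : x ∈ piAntidiag univ m)
    (i : ι) :
    x + Pi.single i 1 ∈ piAntidiag univ (m + 1) := by
  simp only [mem_piAntidiag, mem_univ, implies_true, and_true] at hx ⊢
  exact (sum_add_single_one x i).trans (by rw [hx])

lemma sub_single_one_mem_piAntidiag {y : ι → ℕ} {m : ℕ} (hy : y ∈ piAntidiag univ (m + 1))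
    {i : ι} (hyi : y i ≠ 0) : y - Pi.single i 1 ∈ piAntidiag univ m := by
  have h := sum_add_single_one (y - Pi.single i 1) i
  rw [sub_single_one_add_single_one hyi] at h
  simp_all

lemma sum_add_one_of_mem_piAntidiag {x : ι → ℕ} {m : ℕ} (hx : x ∈ piAntidiag univ m) :
    ∑ i, (x i + 1) = m + Fintype.card ι := by
  simp_all [sum_add_distrib]

lemma sum_sum_add_one_le_of_forall_add_single_mem {T A : Finset (ι → ℕ)}
    (hTA : ∀ x ∈ T, ∀ i, x + Pi.single i 1 ∈ A) :
    ∑ x ∈ T, ∑ i, (x i + 1) ≤ ∑ y ∈ A, ∑ i, y i := by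
  have hmaps : (T ×ˢ univ).image stepUp ⊆ A ×ˢ univ := by
    simp only [subset_iff, mem_image, mem_product, mem_univ, and_true]
    rintro _ ⟨⟨x, i⟩, hx, rfl⟩
    exact hTA x hx i
  rw [← sum_product', ← sum_product']
  calc ∑ p ∈ T ×ˢ univ, (p.1 p.2 + 1) = ∑ q ∈ (T ×ˢ univ).image stepUp, q.1 q.2 := by
        rw [sum_image stepUp_injective.injOn]
        simp only [stepUp_apply_snd]
    _ ≤ ∑ q ∈ A ×ˢ univ, q.1 q.2 := sum_le_sum_of_subset hmaps

lemma sum_sum_add_one_piAntidiag (m : ℕ) :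
    ∑ x ∈ piAntidiag (univ : Finset ι) m, ∑ i, (x i + 1) =
      ∑ y ∈ piAntidiag (univ : Finset ι) (m + 1), ∑ i, y i := by
  rw [← sum_product', ← sum_product']
  refine sum_of_injOn stepUp stepUp_injective.injOn ?_ ?_ fun p _ => (stepUp_apply_snd p).symm
  · rintro ⟨x, i⟩ hx
    simp only [coe_product, Set.mem_prod, mem_coe, mem_univ, and_true] at hx ⊢
    exact add_single_one_mem_piAntidiag hx i
  · -- a pair `(y, i)` with `y i ≠ 0` is the image of `(y - single i 1, i)`
    rintro ⟨y, i⟩ hy hnot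
    by_contra hyi
    simp only [mem_product, mem_univ, and_true] at hy
    refine hnot ⟨(y - Pi.single i 1, i), ?_, ?_⟩
    · simpa using sub_single_one_mem_piAntidiag hy hyi
    · simp [stepUp, sub_single_one_add_single_one hyi]

lemma card_mul_le_card_mul_of_forall_add_single_mem {T A : Finset (ι → ℕ)} {m : ℕ}
    (hT : T ⊆ piAntidiag univ m) (hA : A ⊆ piAntidiag univ (m + 1))
    (hTA : ∀ x ∈ T, ∀ i, x + Pi.single i 1 ∈ A) :
    (m + Fintype.card ι) * #T ≤ (m + 1) * #A := by
  calc (m + Fintype.card ι) * #T = ∑ x ∈ T, ∑ i, (x i + 1) := by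
        rw [sum_congr rfl fun x hx => sum_add_one_of_mem_piAntidiag (hT hx), sum_const,
          smul_eq_mul, mul_comm]
    _ ≤ ∑ y ∈ A, ∑ i, y i := sum_sum_add_one_le_of_forall_add_single_mem hTA
    _ = (m + 1) * #A := by
        rw [sum_congr rfl fun y hy => (mem_piAntidiag.1 (hA hy)).1, sum_const, smul_eq_mul,
          mul_comm]

lemma succ_mul_card_piAntidiag_succ (m : ℕ) :
    (m + 1) * #(piAntidiag (univ : Finset ι) (m + 1)) =
      (m + Fintype.card ι) * #(piAntidiag (univ : Finset ι) m) := by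
  calc (m + 1) * #(piAntidiag (univ : Finset ι) (m + 1))
      = ∑ y ∈ piAntidiag univ (m + 1), ∑ i, y i := by
        rw [sum_congr rfl fun y hy => (mem_piAntidiag.1 hy).1, sum_const, smul_eq_mul, mul_comm]
    _ = ∑ x ∈ piAntidiag univ m, ∑ i, (x i + 1) :=
        (sum_sum_add_one_piAntidiag (ι := ι) m).symm
    _ = (m + Fintype.card ι) * #(piAntidiag (univ : Finset ι) m) := by
        rw [sum_congr rfl fun x hx => sum_add_one_of_mem_piAntidiag hx, sum_const, smul_eq_mul,
          mul_comm]

end LevelSets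

section OrthantGrid

open Finset

variable {d : ℕ}

lemma orthantGrid_adj_add_single (x : Fin d → ℕ) (i : Fin d) :
    (orthantGrid d).Adj x (x + Pi.single i 1) := by
  change ∑ j, ((x j : ℤ) - ((x + Pi.single i 1 : Fin d → ℕ) j : ℕ)).natAbs = 1
  rw [sum_eq_single i fun j _ hj => by simp [hj]] <;> simp

lemma sum_le_sum_add_one_of_adj {x y : Fin d → ℕ} (h : (orthantGrid d).Adj x y) :
    ∑ i, y i ≤ ∑ i, x i + 1 := by
  have hle : ∑ i, ((y i : ℤ) - x i) ≤ ∑ i, (((x i : ℤ) - y i).natAbs : ℤ) :=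
    sum_le_sum fun i _ => by rw [← Int.natAbs_neg, neg_sub]; exact Int.le_natAbs
  have h1 : ∑ i, (((x i : ℤ) - y i).natAbs : ℤ) = 1 := by
    rw [← Nat.cast_sum, show ∑ i, ((x i : ℤ) - y i).natAbs = 1 from h, Nat.cast_one]
  rw [sum_sub_distrib, h1] at hle
  exact_mod_cast (by omega : ∑ i, (y i : ℤ) ≤ ∑ i, (x i : ℤ) + 1)

lemma sum_le_sum_add_length {x y : Fin d → ℕ} (p : (orthantGrid d).Walk x y) :
    ∑ i, y i ≤ ∑ i, x i + p.length := by
  induction p with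
  | nil => simp
  | cons h _ ih =>
    have := sum_le_sum_add_one_of_adj h
    rw [Walk.length_cons]
    omega

lemma exists_walk_zero_length_eq_sum (x : Fin d → ℕ) :
    ∃ p : (orthantGrid d).Walk 0 x, p.length = ∑ i, x i := by
  induction hn : ∑ i, x i generalizing x with
  | zero =>
    obtain rfl : x = 0 := funext fun i => sum_eq_zero_iff.1 hn i (mem_univ i)
    exact ⟨Walk.nil, rfl⟩
  | succ n ih =>
    obtain ⟨i, hi⟩ : ∃ i, x i ≠ 0 := by
      by_contra! h
      simp [h] at hn
    have hx := sub_single_one_add_single_one hi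
    have hsum : ∑ j, (x - Pi.single i 1 : Fin d → ℕ) j = n := by
      have := sum_add_single_one (x - Pi.single i 1) i
      rw [hx] at this
      omega
    obtain ⟨p, hp⟩ := ih _ hsum
    refine ⟨(p.concat (orthantGrid_adj_add_single _ i)).copy rfl hx, ?_⟩
    rw [Walk.length_copy, Walk.length_concat, hp]

lemma orthantGrid_dist_zero (x : Fin d → ℕ) : (orthantGrid d).dist 0 x = ∑ i, x i := by
  obtain ⟨p, hp⟩ := exists_walk_zero_length_eq_sum x
  obtain ⟨q, hq⟩ := (Walk.reachable p).exists_walk_length_eq_dist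
  have := sum_le_sum_add_length q
  have := hp ▸ dist_le p
  simp only [Pi.zero_apply, sum_const_zero, zero_add] at *
  omega

lemma sphere_orthantGrid_zero (m : ℕ) :
    sphere (orthantGrid d) 0 m = ↑(piAntidiag (univ : Finset (Fin d)) m) := by
  ext x
  obtain ⟨p, -⟩ := exists_walk_zero_length_eq_sum x
  simp [sphere, orthantGrid_dist_zero, p.reachable]

end OrthantGrid

lemma div_le_div_of_mul_eq_of_mul_le {s₀ s₁ t a k l : ℝ} (hk : 0 < k) (hs₀ : 0 < s₀)
    (ht : 0 < t) (hs : k * s₁ = l * s₀) (hta : l * t ≤ k * a) : s₁ / s₀ ≤ a / t := by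
  rw [div_le_div_iff₀ hs₀ ht]
  refine le_of_mul_le_mul_left ?_ hk
  calc k * (s₁ * t) = s₀ * (l * t) := by rw [← mul_assoc, hs]; ring
    _ ≤ s₀ * (k * a) := mul_le_mul_of_nonneg_left hta hs₀.le
    _ = k * (a * s₀) := by ring

open Finset in
/-- the positive orthant of the `d`-dimensional square grid has homogeneous growth
with respect to the origin, from radius `0`: for every `m` and every nonempty `T ⊆ S_m`,
`|T*|/|T| ≥ s_{m+1}/s_m ≥ 1`. -/
theorem stmt15 (d : ℕ) (hd : 0 < d) :
    ∀ m : ℕ, ∀ T ⊆ sphere (orthantGrid d) 0 m, T.Nonempty →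
      (((sphere (orthantGrid d) 0 (m + 1)).ncard : ℝ) /
          ((sphere (orthantGrid d) 0 m).ncard : ℝ) ≤
        ((nextAdj (orthantGrid d) 0 m T).ncard : ℝ) / (T.ncard : ℝ)) ∧
      (1 ≤ ((sphere (orthantGrid d) 0 (m + 1)).ncard : ℝ) /
          ((sphere (orthantGrid d) 0 m).ncard : ℝ)) := by
  intro m T hT hTne
  have hnext :
      nextAdj (orthantGrid d) 0 m T ⊆ ↑(piAntidiag (univ : Finset (Fin d)) (m + 1)) :=
    fun y hy => sphere_orthantGrid_zero (m + 1) ▸ hy.1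
  simp only [sphere_orthantGrid_zero] at hT ⊢
  obtain ⟨T, rfl⟩ := ((piAntidiag univ m).finite_toSet.subset hT).exists_finset_coe
  obtain ⟨A, hA⟩ := ((piAntidiag univ (m + 1)).finite_toSet.subset hnext).exists_finset_coe
  have hTA : ∀ x ∈ T, ∀ i, x + Pi.single i 1 ∈ A := fun x hx i => by
    rw [← mem_coe, hA, nextAdj, sphere_orthantGrid_zero]
    exact ⟨add_single_one_mem_piAntidiag (hT hx) i, x, hx, orthantGrid_adj_add_single x i⟩
  have hup := card_mul_le_card_mul_of_forall_add_single_mem (coe_subset.1 hT)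
    (coe_subset.1 (hA ▸ hnext)) hTA
  have hsph := succ_mul_card_piAntidiag_succ (ι := Fin d) m
  rw [Fintype.card_fin] at hup hsph
  have hT0 : 0 < #T := card_pos.2 (coe_nonempty.1 hTne)
  have hS0 : 0 < #(piAntidiag univ m) :=
    card_pos.2 ((coe_nonempty.1 hTne).mono (coe_subset.1 hT))
  rw [← hA]
  simp only [Set.ncard_coe_finset]
  constructor
  · exact div_le_div_of_mul_eq_of_mul_le (k := m + 1) (l := m + d) (by positivity)
      (by exact_mod_cast hS0) (by exact_mod_cast hT0) (by exact_mod_cast hsph)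
      (by exact_mod_cast hup)
  · rw [one_le_div (by exact_mod_cast hS0)]
    refine Nat.cast_le.2 (Nat.le_of_mul_le_mul_left ?_ m.succ_pos)
    calc (m + 1) * #(piAntidiag univ m) ≤ (m + d) * #(piAntidiag univ m) :=
          Nat.mul_le_mul_right _ (by omega)
      _ = (m + 1) * #(piAntidiag univ (m + 1)) := hsph.symm

end Firefighter
end

section
/- Let d and q be positive integers with q < d − 2 (equivalently, lim_{n→∞} n^q / n^{d−2} = 0). Then the d-dimensional square grid L^d does not satisfy the O(n^q)-containment property. In particular, for d ≥ 4, L^d does not satisfy the O(n^{d−3})-containment property. -/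
open SimpleGraph

/-!
Start the fire on a cube of side `m`. By the discrete Loomis–Whitney inequality a set `S` of at
least `t^d` vertices has a coordinate-hyperplane projection of size at least `t^(d-1)`, so the
shift of `S` by one unit in that direction meets at least `t^(d-1)` vertices outside `S`; each
of them burns at the next step unless it is protected. While at most `c n^(d-2)` vertices have
been protected by time `n`, this forces the burnt set to contain at least `(m+k)^d` vertices
after `k 2^(d+1)` steps, so it never stops growing.
-/

open Finset
open scoped ENNReal

theorem ENNReal.sum_prod_rpow_le_prod_sum_rpow {ι τ : Type*} (A : Finset ι) (T : Finset τ)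
    (f : ι → τ → ℝ≥0∞) {w : ι → ℝ} (hw : ∑ i ∈ A, w i = 1) (hw0 : ∀ i ∈ A, 0 ≤ w i) :
    ∑ t ∈ T, ∏ i ∈ A, f i t ^ w i ≤ ∏ i ∈ A, (∑ t ∈ T, f i t) ^ w i := by
  let _ : MeasurableSpace T := ⊤
  have := ENNReal.lintegral_prod_norm_pow_le (μ := MeasureTheory.Measure.count) A
    (f := fun i (t : T) => f i t) (fun i _ => (measurable_of_countable _).aemeasurable) hw hw0
  simpa [MeasureTheory.lintegral_fintype, sum_attach T (fun t => ∏ i ∈ A, f i t ^ w i),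
    sum_attach T] using this

theorem Nat.pow_sum_le_mul_prod_sum {ι τ : Type*} {A : Finset ι} (hA : A.Nonempty)
    {T : Finset τ} {s : τ → ℕ} {M : ℕ} {p : ι → τ → ℕ}
    (h : ∀ t ∈ T, s t ^ #A ≤ M * ∏ i ∈ A, p i t) :
    (∑ t ∈ T, s t) ^ #A ≤ M * ∏ i ∈ A, ∑ t ∈ T, p i t := by
  set k := #A
  have hk : k ≠ 0 := hA.card_pos.ne'
  have hr : (0 : ℝ) ≤ (k : ℝ)⁻¹ := by positivity
  suffices hroot : ((∑ t ∈ T, s t : ℕ) : ℝ≥0∞) ≤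
      (M : ℝ≥0∞) ^ (k : ℝ)⁻¹ * ∏ i ∈ A, ((∑ t ∈ T, p i t : ℕ) : ℝ≥0∞) ^ (k : ℝ)⁻¹ by
    have := pow_le_pow_left' hroot k
    rw [mul_pow, ← prod_pow, ENNReal.rpow_inv_natCast_pow hk] at this
    simp only [ENNReal.rpow_inv_natCast_pow hk] at this
    exact_mod_cast this
  calc ((∑ t ∈ T, s t : ℕ) : ℝ≥0∞)
      ≤ ∑ t ∈ T, ((M * ∏ i ∈ A, p i t : ℕ) : ℝ≥0∞) ^ (k : ℝ)⁻¹ := by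
        push_cast
        refine sum_le_sum fun t ht => ?_
        rw [← ENNReal.pow_rpow_inv_natCast hk (s t : ℝ≥0∞)]
        gcongr
        exact_mod_cast h t ht
    _ = (M : ℝ≥0∞) ^ (k : ℝ)⁻¹ * ∑ t ∈ T, ∏ i ∈ A, (p i t : ℝ≥0∞) ^ (k : ℝ)⁻¹ := by
        push_cast
        simp only [ENNReal.mul_rpow_of_nonneg _ _ hr, ENNReal.prod_rpow_of_nonneg hr, mul_sum]
    _ ≤ (M : ℝ≥0∞) ^ (k : ℝ)⁻¹ * ∏ i ∈ A, ((∑ t ∈ T, p i t : ℕ) : ℝ≥0∞) ^ (k : ℝ)⁻¹ := by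
        push_cast
        gcongr
        exact ENNReal.sum_prod_rpow_le_prod_sum_rpow A T _ (by simp [k, hk]) fun _ _ => hr

namespace Finset

section LoomisWhitney

variable {ι β : Type*} [DecidableEq ι] [DecidableEq β] [DecidableEq (ι → β)] [Zero β]

theorem card_filter_apply_eq_le_card_image_update (S : Finset (ι → β)) (i : ι) (b : β) :
    #{x ∈ S | x i = b} ≤ #(S.image (Function.update · i 0)) := by
  refine card_le_card_of_injOn _ (fun x hx => mem_image_of_mem _ (mem_filter.mp hx).1) ?_
  intro x hx y hy hxy
  rw [← Function.update_eq_self i x, ← Function.update_eq_self i y, (mem_filter.mp hx).2,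
    (mem_filter.mp hy).2]
  simpa using congrArg (Function.update · i b) hxy

theorem sum_card_image_update_fiber_le (S : Finset (ι → β)) {i j : ι} (hij : i ≠ j) :
    ∑ b ∈ S.image (· j), #({x ∈ S | x j = b}.image (Function.update · i 0)) ≤
      #(S.image (Function.update · i 0)) := by
  rw [card_eq_sum_card_fiberwise (f := (· j)) (t := S.image (· j))]
  · refine sum_le_sum fun b _ => card_le_card ?_
    intro y hy
    obtain ⟨x, hx, rfl⟩ := mem_image.mp hy
    obtain ⟨hxS, hxb⟩ := mem_filter.mp hx
    exact mem_filter.mpr ⟨mem_image_of_mem _ hxS, by simp [Function.update_of_ne hij.symm, hxb]⟩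
  · intro y hy
    obtain ⟨x, hx, rfl⟩ := mem_image.mp hy
    simpa [Function.update_of_ne hij.symm] using mem_image_of_mem (· j) hx

-- Loomis–Whitney: slice `S` along coordinate `j`, bound each slice by its projections, and glue
-- the slices with Hölder.
theorem card_pow_le_prod_card_image_update (A : Finset ι) {S : Finset (ι → β)}
    (hS : S.Nonempty) : #S ^ (#A - 1) ≤ ∏ i ∈ A, #(S.image (Function.update · i 0)) := by
  induction A using Finset.induction_on generalizing S with
  | empty => simp
  | insert j A hj ih =>
    rw [prod_insert hj, card_insert_of_notMem hj, Nat.add_sub_cancel]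
    rcases A.eq_empty_or_nonempty with rfl | hA
    · simpa using hS.image (Function.update · j 0)
    set T : Finset β := S.image (· j)
    have hfiber : ∀ b ∈ T, #{x ∈ S | x j = b} ^ #A ≤
        #(S.image (Function.update · j 0)) *
          ∏ i ∈ A, #({x ∈ S | x j = b}.image (Function.update · i 0)) := by
      intro b hb
      obtain ⟨x, hx, rfl⟩ := mem_image.mp hb
      rw [← Nat.sub_add_cancel hA.card_pos, pow_succ']
      exact Nat.mul_le_mul (card_filter_apply_eq_le_card_image_update S j _)
        (ih ⟨x, mem_filter.mpr ⟨hx, rfl⟩⟩)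
    calc #S ^ #A = (∑ b ∈ T, #{x ∈ S | x j = b}) ^ #A := by
          rw [← card_eq_sum_card_fiberwise fun x hx => mem_image_of_mem _ hx]
      _ ≤ #(S.image (Function.update · j 0)) *
            ∏ i ∈ A, ∑ b ∈ T, #({x ∈ S | x j = b}.image (Function.update · i 0)) :=
          Nat.pow_sum_le_mul_prod_sum hA hfiber
      _ ≤ _ := Nat.mul_le_mul_left _ (prod_le_prod' fun i hi =>
          sum_card_image_update_fiber_le S (ne_of_mem_of_not_mem hi hj))

theorem exists_pow_le_card_image_update [Fintype ι] [Nonempty ι] {S : Finset (ι → β)} {t : ℕ}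
    (ht : 1 ≤ t) (hS : t ^ Fintype.card ι ≤ #S) :
    ∃ i, t ^ (Fintype.card ι - 1) ≤ #(S.image (Function.update · i 0)) := by
  set d := Fintype.card ι
  have hSne : S.Nonempty := card_pos.mp ((Nat.one_le_pow _ _ ht).trans hS)
  by_contra! hsmall
  have hlt : ∏ i, #(S.image (Function.update · i 0)) < ∏ _i : ι, t ^ (d - 1) :=
    prod_lt_prod_of_nonempty (fun i _ => card_pos.mpr (hSne.image _)) (fun i _ => hsmall i)
      univ_nonempty
  have hLW := card_pow_le_prod_card_image_update univ hSne
  rw [prod_const, card_univ, ← pow_mul, mul_comm, pow_mul] at hlt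
  rw [card_univ] at hLW
  exact absurd (hLW.trans_lt hlt) (not_lt.mpr (Nat.pow_le_pow_left hS _))

end LoomisWhitney

theorem card_add_card_image_update_le {ι : Type*} [DecidableEq ι] [DecidableEq (ι → ℤ)]
    (S : Finset (ι → ℤ)) (i : ι) :
    #S + #(S.image (Function.update · i 0)) ≤
      #(S ∪ S.image fun x => Function.update x i (x i + 1)) := by
  rw [union_comm, ← card_sdiff_add_card, add_comm]
  refine Nat.add_le_add_right (card_le_card_of_surjOn (Function.update · i 0) ?_) _
  rintro _ hy
  obtain ⟨x₀, hx₀, rfl⟩ := mem_image.mp hy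
  -- the top point of the line through `x₀` in direction `i` leaves `S` when shifted
  obtain ⟨x, hxF, hxmax⟩ := exists_max_image
    {x ∈ S | Function.update x i 0 = Function.update x₀ i 0} (· i) ⟨x₀, by simp [hx₀]⟩
  obtain ⟨hxS, hxline⟩ := mem_filter.mp hxF
  refine ⟨Function.update x i (x i + 1), mem_sdiff.mpr ⟨mem_image_of_mem _ hxS, fun hmem => ?_⟩,
    by simpa using hxline⟩
  have := hxmax _ (mem_filter.mpr ⟨hmem, by simpa using hxline⟩)
  simp at this

end Finset

theorem Nat.add_one_pow_le (d : ℕ) {s : ℕ} (hs : 1 ≤ s) :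
    (s + 1) ^ d ≤ s ^ d + 2 ^ d * s ^ (d - 1) := by
  simp only [add_pow, sum_range_succ, one_pow, mul_one, Nat.choose_self, Nat.cast_id]
  rw [add_comm]
  gcongr
  calc ∑ m ∈ range d, s ^ m * d.choose m
      ≤ ∑ m ∈ range d, s ^ (d - 1) * d.choose m := by
        refine sum_le_sum fun m hm => ?_
        gcongr
        have := mem_range.mp hm
        omega
    _ ≤ 2 ^ d * s ^ (d - 1) := by
        rw [← mul_sum, mul_comm, ← Nat.sum_range_choose d]
        gcongr
        exact d.le_succ

theorem Nat.add_mul_le_of_forall_add_le {b : ℕ → ℕ} {n D g : ℕ}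
    (h : ∀ j < D, b (n + j) + g ≤ b (n + j + 1)) : b n + D * g ≤ b (n + D) := by
  induction D with
  | zero => simp
  | succ D ih =>
    have := h D D.lt_succ_self
    have := ih fun j hj => h j (by omega)
    rw [← add_assoc]
    linarith

theorem Nat.sum_Icc_mul_pow_le {c q e : ℕ} (hqe : q + 1 ≤ e) (n : ℕ) :
    ∑ i ∈ Icc 1 n, c * i ^ q ≤ c * n ^ e := by
  calc ∑ i ∈ Icc 1 n, c * i ^ q ≤ ∑ _i ∈ Icc 1 n, c * n ^ q :=
        sum_le_sum fun i hi => by gcongr; exact (mem_Icc.mp hi).2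
    _ = c * n ^ (q + 1) := by
        rw [sum_const, Nat.card_Icc, Nat.add_sub_cancel, smul_eq_mul, pow_succ]
        ring
    _ ≤ c * n ^ e := by
        rcases n.eq_zero_or_pos with rfl | hn
        · simp
        · exact Nat.mul_le_mul_left c (Nat.pow_le_pow_right hn hqe)

namespace Firefighter

-- In the `k`-th window of `2^(d+1)` steps the burnt set has at least `s^d` vertices, `s = m + k`,
-- and the choice of `m` keeps the wall term below `s^(d-1)/2`, so the window gains at least
-- `2^d s^(d-1) ≥ (s+1)^d - s^d` vertices.
theorem pow_le_of_isoperimetric_growth {d c : ℕ} {b : ℕ → ℕ} (hd : 2 ≤ d) (hb : Monotone b)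
    (hstep : ∀ n t, 1 ≤ t → t ^ d ≤ b n → b n + t ^ (d - 1) ≤ b (n + 1) + c * (n + 1) ^ (d - 2))
    {m : ℕ} (hm : 2 * c * (2 ^ (d + 1)) ^ (d - 2) < m) (h0 : m ^ d ≤ b 0) (k : ℕ) :
    (m + k) ^ d ≤ b (k * 2 ^ (d + 1)) := by
  set D := 2 ^ (d + 1)
  induction k with
  | zero => simpa using h0
  | succ k ih =>
    set s := m + k
    set C := c * ((k + 1) * D) ^ (d - 2)
    have hs : 1 ≤ s := by omega
    have hC : 2 * C ≤ s ^ (d - 1) := by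
      calc 2 * C = 2 * c * D ^ (d - 2) * (k + 1) ^ (d - 2) := by
            rw [show C = c * ((k + 1) * D) ^ (d - 2) from rfl, mul_pow]; ring
        _ ≤ 2 * c * D ^ (d - 2) * s ^ (d - 2) := by gcongr; omega
        _ ≤ s * s ^ (d - 2) := by gcongr; omega
        _ = s ^ (d - 1) := by rw [← pow_succ']; congr 1; omega
    have hwindow : ∀ j < D, b (k * D + j) + (s ^ (d - 1) - C) ≤ b (k * D + j + 1) := by
      intro j hj
      have hstep' := hstep (k * D + j) s hs (ih.trans (hb (by omega)))
      have : c * (k * D + j + 1) ^ (d - 2) ≤ C := by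
        show _ ≤ c * ((k + 1) * D) ^ (d - 2)
        gcongr
        rw [add_mul, one_mul]
        omega
      omega
    have hgrow := Nat.add_mul_le_of_forall_add_le hwindow
    have hgain : 2 ^ d * s ^ (d - 1) ≤ D * (s ^ (d - 1) - C) := by
      rw [show D = 2 ^ d * 2 from pow_succ 2 d, mul_assoc]
      gcongr
      omega
    calc (m + (k + 1)) ^ d = (s + 1) ^ d := by rw [← add_assoc]
      _ ≤ s ^ d + 2 ^ d * s ^ (d - 1) := Nat.add_one_pow_le d hs
      _ ≤ b (k * D) + D * (s ^ (d - 1) - C) := add_le_add ih hgain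
      _ ≤ b ((k + 1) * D) := by rwa [add_mul, one_mul]

def protectedUpTo {V : Type*} (W : ℕ → Set V) (n : ℕ) : Set V := ⋃ i ∈ Icc 1 n, W i

section Fire

variable {V : Type*} {G : SimpleGraph V} {r : ℕ} {X0 : Set V} {W : ℕ → Set V}

theorem protectedUpTo_finite_and_ncard_le {f : ℕ → ℕ}
    (hW : ∀ n, 1 ≤ n → (W n).Finite ∧ (W n).ncard ≤ f n) (n : ℕ) :
    (protectedUpTo W n).Finite ∧ (protectedUpTo W n).ncard ≤ ∑ i ∈ Icc 1 n, f i :=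
  ⟨(Icc 1 n).finite_toSet.biUnion fun i hi => (hW i (mem_Icc.mp hi).1).1,
    (set_ncard_biUnion_le _ _).trans (sum_le_sum fun i hi => (hW i (mem_Icc.mp hi).1).2)⟩

theorem mem_fireSet_succ_iff {n : ℕ} {v : V} :
    v ∈ fireSet G r X0 W (n + 1) ↔ ∃ u ∈ fireSet G r X0 W n, ∃ p : G.Walk u v,
      p.length ≤ r ∧ ∀ w ∈ p.support, w ∉ protectedUpTo W (n + 1) := by
  simp [fireSet, protectedUpTo]

theorem fireSet_finite (hG : LocallyFiniteGraph G) (hX0 : X0.Finite) (n : ℕ) :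
    (fireSet G 1 X0 W n).Finite := by
  induction n with
  | zero => exact hX0
  | succ n ih =>
    refine (ih.union (ih.biUnion fun u _ => hG u)).subset fun v hv => ?_
    obtain ⟨u, hu, p, hp, -⟩ := mem_fireSet_succ_iff.mp hv
    cases p with
    | nil => exact Or.inl hu
    | cons huw q =>
      obtain rfl := q.eq_of_length_eq_zero (by rw [Walk.length_cons] at hp; omega)
      exact Or.inr (Set.mem_biUnion hu huw)

variable (hdisj : ∀ n, Disjoint (fireSet G r X0 W n) (W (n + 1)))
include hdisj

theorem notMem_protectedUpTo_of_mem_fireSet {n : ℕ} {v : V} (hv : v ∈ fireSet G r X0 W n) :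
    v ∉ protectedUpTo W (n + 1) := by
  simp only [protectedUpTo, Set.mem_iUnion, mem_Icc, not_exists]
  rintro i ⟨hi1, hin⟩ hvi
  rcases Nat.lt_or_eq_of_le hin with hlt | rfl
  · cases n with
    | zero => omega
    | succ n =>
      obtain ⟨u, -, p, -, havoid⟩ := hv
      exact havoid v p.end_mem_support i hi1 (by omega) hvi
  · exact Set.disjoint_left.mp (hdisj n) hv hvi

theorem fireSet_monotone : Monotone (fireSet G r X0 W) := by
  refine monotone_nat_of_le_succ fun n v hv => mem_fireSet_succ_iff.mpr ⟨v, hv, .nil, by simp, ?_⟩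
  simpa using notMem_protectedUpTo_of_mem_fireSet hdisj hv

theorem mem_fireSet_succ_of_adj (hr : 1 ≤ r) {n : ℕ} {u v : V} (hu : u ∈ fireSet G r X0 W n)
    (huv : G.Adj u v) : v ∈ fireSet G r X0 W (n + 1) ∨ v ∈ protectedUpTo W (n + 1) := by
  refine or_iff_not_imp_right.mpr fun hv =>
    mem_fireSet_succ_iff.mpr ⟨u, hu, .cons huv .nil, by simpa using hr, ?_⟩
  simpa [hv] using notMem_protectedUpTo_of_mem_fireSet hdisj hu

end Fire

theorem gridZ_adj_update_add_one {d : ℕ} (x : Fin d → ℤ) (i : Fin d) :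
    (gridZ d).Adj x (Function.update x i (x i + 1)) := by
  show ∑ j, (x j - Function.update x i (x i + 1) j).natAbs = 1
  rw [sum_eq_single i (fun j _ hj => by simp [Function.update_of_ne hj]) (by simp)]
  simp

theorem gridZ_locallyFinite (d : ℕ) : LocallyFiniteGraph (gridZ d) := by
  intro x
  refine (Set.finite_Icc (x - 1) (x + 1)).subset fun y (hxy : ∑ j, (x j - y j).natAbs = 1) => ?_
  have h : ∀ j, (x j - y j).natAbs ≤ 1 := fun j =>
    hxy ▸ single_le_sum (f := fun j => (x j - y j).natAbs) (fun j _ => Nat.zero_le _) (mem_univ j)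
  exact ⟨fun j => by have := h j; simp; omega, fun j => by have := h j; simp; omega⟩

theorem ncard_fireSet_add_pow_le {d : ℕ} [NeZero d] {X0 : Set (Fin d → ℤ)}
    {W : ℕ → Set (Fin d → ℤ)} (hdisj : ∀ n, Disjoint (fireSet (gridZ d) 1 X0 W n) (W (n + 1)))
    (hfin : ∀ n, (fireSet (gridZ d) 1 X0 W n).Finite) {n t : ℕ}
    (hwall : (protectedUpTo W (n + 1)).Finite) (ht : 1 ≤ t)
    (hn : t ^ d ≤ (fireSet (gridZ d) 1 X0 W n).ncard) :
    (fireSet (gridZ d) 1 X0 W n).ncard + t ^ (d - 1) ≤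
      (fireSet (gridZ d) 1 X0 W (n + 1)).ncard + (protectedUpTo W (n + 1)).ncard := by
  set S := (hfin n).toFinset
  rw [Set.ncard_eq_toFinset_card _ (hfin n), Set.ncard_eq_toFinset_card _ (hfin (n + 1)),
    Set.ncard_eq_toFinset_card _ hwall]
  rw [Set.ncard_eq_toFinset_card _ (hfin n)] at hn
  obtain ⟨i, hi⟩ := exists_pow_le_card_image_update (ι := Fin d) ht (by simpa using hn)
  have hsub : S ∪ S.image (fun x => Function.update x i (x i + 1)) ⊆
      (hfin (n + 1)).toFinset ∪ hwall.toFinset := by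
    intro v hv
    simp only [mem_union, mem_image, Set.Finite.mem_toFinset, S] at hv ⊢
    rcases hv with hv | ⟨u, hu, rfl⟩
    · exact Or.inl (fireSet_monotone hdisj n.le_succ hv)
    · exact mem_fireSet_succ_of_adj hdisj le_rfl hu (gridZ_adj_update_add_one u i)
  calc #S + t ^ (d - 1) ≤ #S + #(S.image (Function.update · i 0)) := by simpa using hi
    _ ≤ #(S ∪ S.image fun x => Function.update x i (x i + 1)) :=
        card_add_card_image_update_le S i
    _ ≤ _ := (card_le_card hsub).trans (card_union_le _ _)

theorem gridZ_not_hasContainmentProperty {d c : ℕ} (hd : 2 ≤ d) {f : ℕ → ℕ}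
    (hf : ∀ n, ∑ i ∈ Icc 1 n, f i ≤ c * n ^ (d - 2)) :
    ¬ HasContainmentProperty (gridZ d) 1 f := by
  have : NeZero d := ⟨by omega⟩
  set m := 2 * c * (2 ^ (d + 1)) ^ (d - 2) + 1
  set cube : Finset (Fin d → ℤ) := Fintype.piFinset fun _ => Ico 0 (m : ℤ)
  intro h
  obtain ⟨W, hW, hdisj, N, -, hstab⟩ := h cube cube.finite_toSet
  have hfin := fireSet_finite (W := W) (gridZ_locallyFinite d) cube.finite_toSet
  set b := fun n => (fireSet (gridZ d) 1 cube W n).ncard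
  have hb : Monotone b := fun _ _ h => Set.ncard_le_ncard (fireSet_monotone hdisj h) (hfin _)
  have hstep : ∀ n t, 1 ≤ t → t ^ d ≤ b n →
      b n + t ^ (d - 1) ≤ b (n + 1) + c * (n + 1) ^ (d - 2) := fun n t ht hn =>
      have hwall := protectedUpTo_finite_and_ncard_le hW (n + 1)
      (ncard_fireSet_add_pow_le hdisj hfin hwall.1 ht hn).trans
        (Nat.add_le_add_left (hwall.2.trans (hf _)) _)
  have h0 : m ^ d ≤ b 0 := by
    show m ^ d ≤ (cube : Set (Fin d → ℤ)).ncard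
    rw [Set.ncard_coe_finset, Fintype.card_piFinset]
    simp
  have hbdd : ∀ n, b n ≤ b N := fun n =>
    (le_total n N).elim (fun h => hb h) fun h => (congrArg Set.ncard (hstab n h)).le
  have hgrow := pow_le_of_isoperimetric_growth hd hb hstep (m := m) (lt_add_one _) h0 (b N)
  have := hbdd (b N * 2 ^ (d + 1))
  have := Nat.le_self_pow (n := d) (by omega) (m + b N)
  omega

theorem stmt17_general (d q : ℕ) (hlt : q + 2 < d) :
    (¬ ∃ c : ℕ, 1 ≤ c ∧ HasContainmentProperty (gridZ d) 1 (fun n => c * n ^ q)) ∧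
    (4 ≤ d →
      ¬ ∃ c : ℕ, 1 ≤ c ∧ HasContainmentProperty (gridZ d) 1 (fun n => c * n ^ (d - 3))) := by
  have key : ∀ {e} c, e + 3 ≤ d → ¬ HasContainmentProperty (gridZ d) 1 (fun n => c * n ^ e) :=
    fun c he => gridZ_not_hasContainmentProperty (by omega) (Nat.sum_Icc_mul_pow_le (by omega))
  exact ⟨fun ⟨c, _, h⟩ => key c (by omega) h, fun _ ⟨c, _, h⟩ => key c (by omega) h⟩

/-- for positive integers `q < d - 2`, the grid `L^d` does not satisfy the
`O(n^q)`-containment property; in particular, for `d ≥ 4`, `L^d` does not satisfy the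
`O(n^(d-3))`-containment property. -/
theorem stmt17 (d q : ℕ) (hd : 0 < d) (hq : 0 < q) (hlt : q + 2 < d) :
    (¬ ∃ c : ℕ, 1 ≤ c ∧ HasContainmentProperty (gridZ d) 1 (fun n => c * n ^ q)) ∧
    (4 ≤ d →
      ¬ ∃ c : ℕ, 1 ≤ c ∧ HasContainmentProperty (gridZ d) 1 (fun n => c * n ^ (d - 3))) :=
  stmt17_general d q hlt

end Firefighter
end

section
/- For every integer d ≥ 2, the d-dimensional square grid L^d satisfies the O(n^{d−2})-containment property: there is a constant c ≥ 1 such that L^d has the {c·n^{d−2}}-containment property. -/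
/-!
The fire starts inside the ℓ¹-ball of radius `R`, and along an edge the ℓ¹-norm grows by at most
one, so the fire needs `m` rounds to reach the level set `‖x‖₁ = R + m`. That level set has
`O((R + m) ^ (d - 1))` points, while the budget `c n ^ (d - 2)` summed over `n ≤ m` is of order
`c m ^ (d - 1)`; for `m = 2(R + 1)` and `c = 2 · 7 ^ (d - 1)` it suffices to protect the whole level
set before the fire arrives. The fire is then trapped in a finite ball, and since it only grows, it
eventually stops.
-/

open SimpleGraph

namespace Firefighter

variable {V : Type*}

section Containment

variable {G : SimpleGraph V} {r : ℕ} {X0 : Set V} {W : ℕ → Set V}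

lemma notMem_of_mem_fireSet {n i : ℕ} {v : V} (hv : v ∈ fireSet G r X0 W n) (hi : 1 ≤ i)
    (hin : i ≤ n) : v ∉ W i := by
  cases n with
  | zero => omega
  | succ n =>
    obtain ⟨u, -, p, -, hp⟩ := hv
    exact hp v p.end_mem_support i hi hin

lemma monotone_fireSet (hW : ∀ n, Disjoint (fireSet G r X0 W n) (W (n + 1))) :
    Monotone (fireSet G r X0 W) := by
  refine monotone_nat_of_le_succ fun n v hv => ⟨v, hv, .nil, r.zero_le, fun w hw i hi hin => ?_⟩
  rw [Walk.support_nil, List.mem_singleton] at hw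
  subst hw
  obtain hin | rfl := hin.lt_or_eq
  · exact notMem_of_mem_fireSet hv hi (Nat.lt_succ_iff.1 hin)
  · exact Set.disjoint_left.1 (hW n) hv

lemma le_add_length_of_walk {ρ : V → ℕ} (hρ : ∀ ⦃u v⦄, G.Adj u v → ρ v ≤ ρ u + 1) {u v : V}
    (p : G.Walk u v) : ρ v ≤ ρ u + p.length := by
  induction p with
  | nil => simp
  | cons h p ih =>
    rw [Walk.length_cons]
    have := hρ h
    omega

lemma fireSet_le_add {ρ : V → ℕ} (hρ : ∀ ⦃u v⦄, G.Adj u v → ρ v ≤ ρ u + 1) {R : ℕ}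
    (hX0 : ∀ x ∈ X0, ρ x ≤ R) : ∀ n, ∀ v ∈ fireSet G r X0 W n, ρ v ≤ R + r * n
  | 0, v, hv => hX0 v hv
  | n + 1, v, ⟨u, hu, p, hp, _⟩ => by
    have hu := fireSet_le_add hρ hX0 n u hu
    have hv := le_add_length_of_walk hρ p
    rw [Nat.mul_succ]
    omega

lemma fireSet_lt_of_protects_level {ρ : V → ℕ} (hρ : ∀ ⦃u v⦄, G.Adj u v → ρ v ≤ ρ u + 1)
    {R m : ℕ} (hX0 : ∀ x ∈ X0, ρ x ≤ R)
    (hW : ∀ v, ρ v = R + m → ∃ j, 1 ≤ j ∧ j ≤ m ∧ v ∈ W j) :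
    ∀ n, ∀ v ∈ fireSet G 1 X0 W n, ρ v < R + m
  | 0, v, hv => by
    have := hX0 v hv
    by_contra h
    obtain ⟨j, hj1, hjm, -⟩ := hW v (by omega)
    omega
  | n + 1, v, ⟨u, hu, p, hp, hpW⟩ => by
    have hu_le := fireSet_le_add hρ hX0 n u hu
    have hu_lt := fireSet_lt_of_protects_level hρ hX0 hW n u hu
    have hv := le_add_length_of_walk hρ p
    by_contra h
    obtain ⟨j, hj1, hjm, hjW⟩ := hW v (by omega)
    exact hpW v p.end_mem_support j hj1 (by omega) hjW

end Containment

lemma exists_forall_ge_eq_of_monotone {X : ℕ → Set V} (hX : Monotone X) {K : Set V}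
    (hK : K.Finite) (hXK : ∀ n, X n ⊆ K) : ∃ N, ∀ n, N ≤ n → X n = X N := by
  have : Finite K := hK
  obtain ⟨N, hN⟩ := WellFoundedGT.monotone_chain_condition
    (⟨fun n => ((↑) : K → V) ⁻¹' X n, fun _ _ h => Set.preimage_mono (hX h)⟩ : ℕ →o Set K)
  refine ⟨N, fun n hn => ?_⟩
  have hX_eq : ∀ k, X k = (↑) '' (((↑) : K → V) ⁻¹' X k) := fun k =>
    (Set.image_preimage_eq_of_subset (Subtype.range_coe.symm ▸ hXK k)).symm
  rw [hX_eq n, hX_eq N]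
  exact congrArg _ (hN n hn).symm

lemma exists_batches_of_card_le_sum {α : Type*} [DecidableEq α] (f : ℕ → ℕ) :
    ∀ (m : ℕ) (S : Finset α), S.card ≤ ∑ j ∈ Finset.range m, f (j + 1) →
      ∃ B : ℕ → Finset α, (∀ j, B j ⊆ S) ∧ (∀ j, (B j).card ≤ f j) ∧
        ∀ x ∈ S, ∃ j, 1 ≤ j ∧ j ≤ m ∧ x ∈ B j
  | 0, S, hS => by
    obtain rfl : S = ∅ := Finset.card_eq_zero.1 (Nat.le_zero.1 hS)
    exact ⟨fun _ => ∅, fun _ => le_rfl, fun _ => Nat.zero_le _, fun _ h => absurd h (by simp)⟩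
  | m + 1, S, hS => by
    obtain ⟨T, hTS, hT⟩ := Finset.exists_subset_card_eq (min_le_left S.card (f (m + 1)))
    rw [Finset.sum_range_succ] at hS
    have hrest : (S \ T).card ≤ ∑ j ∈ Finset.range m, f (j + 1) := by
      rw [Finset.card_sdiff_of_subset hTS, hT]
      omega
    obtain ⟨B, hBS, hBcard, hBcover⟩ := exists_batches_of_card_le_sum f m (S \ T) hrest
    refine ⟨Function.update B (m + 1) T, fun j => ?_, fun j => ?_, fun x hx => ?_⟩
    · rcases eq_or_ne j (m + 1) with rfl | hj
      · simpa using hTS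
      · simpa [hj] using (hBS j).trans Finset.sdiff_subset
    · rcases eq_or_ne j (m + 1) with rfl | hj
      · simp only [Function.update_self, hT]
        omega
      · simpa [hj] using hBcard j
    · by_cases hxT : x ∈ T
      · exact ⟨m + 1, by omega, le_rfl, by simpa using hxT⟩
      · obtain ⟨j, hj1, hjm, hxB⟩ := hBcover x (Finset.mem_sdiff.2 ⟨hx, hxT⟩)
        exact ⟨j, hj1, by omega, by rwa [Function.update_of_ne (by omega)]⟩

theorem hasContainmentProperty_of_ncard_level_le {G : SimpleGraph V} {f : ℕ → ℕ} (ρ : V → ℕ)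
    (hρ : ∀ ⦃u v⦄, G.Adj u v → ρ v ≤ ρ u + 1) (hfin : ∀ D, {v | ρ v ≤ D}.Finite)
    (hbudget : ∀ R, ∃ m, {v | ρ v = R + m}.ncard ≤ ∑ j ∈ Finset.range m, f (j + 1)) :
    HasContainmentProperty G 1 f := by
  classical
  intro X0 hX0
  obtain ⟨R, hR⟩ := (hX0.image ρ).bddAbove
  obtain ⟨m, hm⟩ := hbudget R
  have hS : {v | ρ v = R + m}.Finite := (hfin (R + m)).subset fun _ hv => le_of_eq hv
  obtain ⟨B, hBS, hBcard, hBcover⟩ :=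
    exists_batches_of_card_le_sum f m hS.toFinset (by rwa [← Set.ncard_eq_toFinset_card _ hS])
  set W : ℕ → Set V := fun j => B j
  have hlt : ∀ n, ∀ v ∈ fireSet G 1 X0 W n, ρ v < R + m :=
    fireSet_lt_of_protects_level hρ (fun x hx => hR (Set.mem_image_of_mem ρ hx))
      fun v hv => hBcover v (hS.mem_toFinset.2 hv)
  have hdisj : ∀ n, Disjoint (fireSet G 1 X0 W n) (W (n + 1)) := fun n =>
    Set.disjoint_left.2 fun v hv hvW => (hlt n v hv).ne (hS.mem_toFinset.1 (hBS _ hvW))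
  obtain ⟨N, hN⟩ := exists_forall_ge_eq_of_monotone (monotone_fireSet hdisj) (hfin (R + m))
    fun n v hv => (hlt n v hv).le
  refine ⟨W, fun n _ => ⟨(B n).finite_toSet, ?_⟩, hdisj, N + 1, N.succ_pos, fun n hn => ?_⟩
  · simpa only [W, Set.ncard_coe_finset] using hBcard n
  · rw [hN n (by omega), hN (N + 1) (by omega)]

def l1Norm {d : ℕ} (x : Fin d → ℤ) : ℕ := ∑ i, (x i).natAbs

lemma l1Norm_le_of_adj {d : ℕ} {u v : Fin d → ℤ} (h : (gridZ d).Adj u v) :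
    l1Norm v ≤ l1Norm u + 1 := by
  calc l1Norm v ≤ ∑ i, ((u i).natAbs + (u i - v i).natAbs) :=
        Finset.sum_le_sum fun i _ => by omega
    _ = l1Norm u + 1 := by
        rw [Finset.sum_add_distrib, show ∑ i, (u i - v i).natAbs = 1 from h]
        rfl

lemma natAbs_le_l1Norm {d : ℕ} (x : Fin d → ℤ) (i : Fin d) : (x i).natAbs ≤ l1Norm x :=
  Finset.single_le_sum (f := fun i => (x i).natAbs) (fun _ _ => Nat.zero_le _) (Finset.mem_univ i)

lemma finite_setOf_l1Norm_le (d D : ℕ) : {x : Fin d → ℤ | l1Norm x ≤ D}.Finite := by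
  refine (Set.Finite.pi fun _ => Set.finite_Icc (-(D : ℤ)) D).subset fun x hx i _ => ?_
  have := (natAbs_le_l1Norm x i).trans hx
  show -(D : ℤ) ≤ x i ∧ x i ≤ D
  omega

/-- A point of the ℓ¹-sphere of radius `D` is determined by its first `d - 1` coordinates and the
sign of the last one. -/
lemma ncard_setOf_l1Norm_eq_le (d D : ℕ) :
    {x : Fin d → ℤ | l1Norm x = D}.ncard ≤ 2 * (2 * D + 1) ^ (d - 1) := by
  cases d with
  | zero =>
    exact (Set.ncard_le_one_of_subsingleton _).trans (Nat.one_le_iff_ne_zero.2 (by positivity))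
  | succ k =>
    let code : (Fin (k + 1) → ℤ) → (Fin k → ℤ) × Bool := fun x => (Fin.init x, 0 ≤ x (Fin.last k))
    let box : Finset ((Fin k → ℤ) × Bool) :=
      Fintype.piFinset (fun _ => Finset.Icc (-(D : ℤ)) D) ×ˢ Finset.univ
    have hnorm : ∀ x : Fin (k + 1) → ℤ,
        l1Norm x = ∑ i, (Fin.init x i).natAbs + (x (Fin.last k)).natAbs := fun x =>
      Fin.sum_univ_castSucc _
    have hmaps : ∀ x ∈ {x : Fin (k + 1) → ℤ | l1Norm x = D}, code x ∈ box := by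
      intro x hx
      simp only [box, Finset.mem_product, Fintype.mem_piFinset, Finset.mem_Icc, Finset.mem_univ,
        and_true]
      intro i
      have := (natAbs_le_l1Norm x i.castSucc).trans hx.le
      exact ⟨by simp only [code, Fin.init]; omega, by simp only [code, Fin.init]; omega⟩
    have hinj : Set.InjOn code {x | l1Norm x = D} := by
      intro x hx y hy hxy
      obtain ⟨hinit, hsign⟩ := Prod.mk.inj hxy
      have hlast : x (Fin.last k) = y (Fin.last k) := by
        have hx' := hnorm x
        have hy' := hnorm y
        rw [hinit] at hx'
        simp only [Set.mem_ofPred_eq] at hx hy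
        simp only [decide_eq_decide] at hsign
        omega
      funext i
      induction i using Fin.lastCases with
      | last => exact hlast
      | cast j => exact congrFun hinit j
    calc _ ≤ (box : Set _).ncard :=
          Set.ncard_le_ncard_of_injOn code hmaps hinj box.finite_toSet
      _ = 2 * (2 * D + 1) ^ (k + 1 - 1) := by
        rw [Set.ncard_coe_finset, Finset.card_product, Fintype.card_piFinset, Finset.prod_const,
          Int.card_Icc, Finset.card_univ, Finset.card_univ, Fintype.card_fin, Fintype.card_bool,
          show (D + 1 - -D : ℤ).toNat = 2 * D + 1 by omega, Nat.add_sub_cancel, mul_comm]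

lemma pow_succ_le_sum_range_two_mul (R e : ℕ) :
    R ^ (e + 1) ≤ ∑ j ∈ Finset.range (2 * R), (j + 1) ^ e := by
  calc R ^ (e + 1) = ∑ _j ∈ Finset.Ico R (2 * R), R ^ e := by
        rw [Finset.sum_const, Nat.card_Ico, smul_eq_mul, pow_succ', two_mul, Nat.add_sub_cancel]
    _ ≤ ∑ j ∈ Finset.Ico R (2 * R), (j + 1) ^ e :=
        Finset.sum_le_sum fun j hj =>
          Nat.pow_le_pow_left ((Finset.mem_Ico.1 hj).1.trans j.le_succ) e
    _ ≤ ∑ j ∈ Finset.range (2 * R), (j + 1) ^ e := by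
        rw [Finset.range_eq_Ico]
        exact Finset.sum_le_sum_of_subset (Finset.Ico_subset_Ico_left (Nat.zero_le R))

theorem stmt18_general (d : ℕ) :
    ∃ c : ℕ, 1 ≤ c ∧ HasContainmentProperty (gridZ d) 1 (fun n => c * n ^ (d - 2)) := by
  refine ⟨2 * 7 ^ (d - 1), Nat.one_le_iff_ne_zero.2 (by positivity),
    hasContainmentProperty_of_ncard_level_le l1Norm (fun _ _ => l1Norm_le_of_adj)
      (finite_setOf_l1Norm_le d) fun R => ⟨2 * (R + 1), ?_⟩⟩
  calc _ ≤ 2 * (2 * (R + 2 * (R + 1)) + 1) ^ (d - 1) := ncard_setOf_l1Norm_eq_le d _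
    _ ≤ 2 * (7 * (R + 1)) ^ (d - 1) := by gcongr; omega
    _ = 2 * 7 ^ (d - 1) * (R + 1) ^ (d - 1) := by rw [mul_pow, mul_assoc]
    _ ≤ 2 * 7 ^ (d - 1) * (R + 1) ^ (d - 2 + 1) := by gcongr <;> omega
    _ ≤ 2 * 7 ^ (d - 1) * ∑ j ∈ Finset.range (2 * (R + 1)), (j + 1) ^ (d - 2) := by
      gcongr
      exact pow_succ_le_sum_range_two_mul _ _
    _ = _ := Finset.mul_sum _ _ _

/-- for `d ≥ 2`, the `d`-dimensional square grid `L^d` satisfies the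
`O(n^(d-2))`-containment property. -/
theorem stmt18 (d : ℕ) (hd : 2 ≤ d) :
    ∃ c : ℕ, 1 ≤ c ∧ HasContainmentProperty (gridZ d) 1 (fun n => c * n ^ (d - 2)) :=
  stmt18_general d

end Firefighter
end
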